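/- Let Λ be a Hermitian operator on a bipartite space with Λ^Γ = Λ and Tr|Λ| ≤ 1, and let H be Hermitian with H + H^Γ = Λ and Tr|H| + Tr|H^Γ| ≤ 1. Define H' = H⊗H⊗H + H^Γ⊗H⊗H + H⊗H^Γ⊗H + H⊗H⊗H^Γ on the triple tensor power. Then H' + H'^Γ = Λ^{⊗3}, Tr|H'| ≤ f(Tr|H|), Tr|H'^Γ| ≤ f(Tr|H^Γ|), and Tr|H'| + Tr|H'^Γ| ≤ 1, where f(x) = x²(3 − 2x). -/

import Mathlib

open Matrix Kronecker ComplexOrder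

/-- Partial transposition on the second tensor factor. -/
def ptrans {a b : Type*} (M : Matrix (a × b) (a × b) ℂ) : Matrix (a × b) (a × b) ℂ :=
  fun p q => M (p.1, q.2) (q.1, p.2)

/-- Partial transposition of all three B factors on the tripled bipartite system. -/
def ptrans3 {a b : Type*}
    (M : Matrix (((a × b) × (a × b)) × (a × b)) (((a × b) × (a × b)) × (a × b)) ℂ) :
    Matrix (((a × b) × (a × b)) × (a × b)) (((a × b) × (a × b)) × (a × b)) ℂ :=
  fun p q =>
    M (((p.1.1.1, q.1.1.2), (p.1.2.1, q.1.2.2)), (p.2.1, q.2.2))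
      (((q.1.1.1, p.1.1.2), (q.1.2.1, p.1.2.2)), (q.2.1, p.2.2))

/-- The trace norm Tr|H| = Tr √(Hᴴ H). -/
noncomputable def trN {n : Type*} [Fintype n] [DecidableEq n] (H : Matrix n n ℂ) : ℝ :=
  (((Matrix.posSemidef_conjTranspose_mul_self H).1.eigenvectorUnitary : Matrix n n ℂ) *
      diagonal (((↑) : ℝ → ℂ) ∘ (Real.sqrt ∘ (Matrix.posSemidef_conjTranspose_mul_self H).1.eigenvalues)) *
      (star (Matrix.posSemidef_conjTranspose_mul_self H).1.eigenvectorUnitary : Matrix n n ℂ)).trace.re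

/-!
Partial transposition of all three B factors acts factorwise on Kronecker products, so `H'^Γ`
is `H'` with the roles of `H` and `H^Γ` exchanged, and `H' + H'^Γ` is the expansion of
`(H + H^Γ)^{⊗3} = Λ^{⊗3}`. The trace norm is multiplicative on Kronecker products and
subadditive, so with `x = Tr|H|`, `y = Tr|H^Γ|` we get `Tr|H'| ≤ x³ + 3x²y ≤ x²(3 - 2x)` because
`y ≤ 1 - x`; symmetrically for `H'^Γ`, and the two bounds add up to `(x + y)³ ≤ 1`.

Subadditivity of the trace norm comes from its variational form
`Tr|M| = max {Re Tr(C M) | C Cᴴ ≤ 1}`.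
-/

open scoped MatrixOrder InnerProductSpace

namespace Matrix

variable {𝕜 n : Type*} [RCLike 𝕜] [Fintype n] [DecidableEq n]

lemma trace_eq_sum_inner_toEuclideanLin (A : Matrix n n 𝕜)
    (b : OrthonormalBasis n 𝕜 (EuclideanSpace 𝕜 n)) :
    A.trace = ∑ i, ⟪b i, toEuclideanLin A (b i)⟫_𝕜 := by
  rw [← LinearMap.trace_eq_sum_inner]
  exact (trace_toLin_eq A (PiLp.basisFun 2 𝕜 n)).symm

lemma norm_toEuclideanLin_sq (A : Matrix n n 𝕜) (v : EuclideanSpace 𝕜 n) :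
    ‖toEuclideanLin A v‖ ^ 2 = RCLike.re ⟪v, toEuclideanLin (Aᴴ * A) v⟫_𝕜 := by
  rw [← inner_self_eq_norm_sq (𝕜 := 𝕜), toLpLin_mul_same, LinearMap.comp_apply,
    toEuclideanLin_conjTranspose_eq_adjoint, LinearMap.adjoint_inner_right]

lemma norm_toEuclideanLin_le_of_conjTranspose_mul_le_one {A : Matrix n n 𝕜} (hA : Aᴴ * A ≤ 1)
    (v : EuclideanSpace 𝕜 n) : ‖toEuclideanLin A v‖ ≤ ‖v‖ := by
  have h := (isPositive_toEuclideanLin_iff.mpr hA).re_inner_nonneg_right v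
  rw [map_sub, LinearMap.sub_apply, inner_sub_right, map_sub, toLpLin_one, LinearMap.id_apply,
    inner_self_eq_norm_sq, ← norm_toEuclideanLin_sq, sub_nonneg] at h
  exact (sq_le_sq₀ (norm_nonneg _) (norm_nonneg _)).mp h

lemma norm_toEuclideanLin_eigenvectorBasis_conjTranspose_mul_self (M : Matrix n n 𝕜) (i : n) :
    ‖toEuclideanLin M ((posSemidef_conjTranspose_mul_self M).1.eigenvectorBasis i)‖ =
      √((posSemidef_conjTranspose_mul_self M).1.eigenvalues i) := by
  set hP := (posSemidef_conjTranspose_mul_self M).1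
  have h : toEuclideanLin (Mᴴ * M) (hP.eigenvectorBasis i) =
      (hP.eigenvalues i : 𝕜) • hP.eigenvectorBasis i := by
    rw [toLpLin_apply, hP.mulVec_eigenvectorBasis, ← RCLike.real_smul_eq_coe_smul]
    rfl
  rw [← Real.sqrt_sq (norm_nonneg _), norm_toEuclideanLin_sq, h, inner_smul_right,
    inner_self_eq_one_of_norm_eq_one (hP.eigenvectorBasis.orthonormal.1 i)]
  simp

end Matrix

section TraceNorm

variable {n : Type*} [Fintype n] [DecidableEq n]

lemma trN_eq_sum_sqrt_eigenvalues (M : Matrix n n ℂ) :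
    trN M = ∑ i, √((posSemidef_conjTranspose_mul_self M).1.eigenvalues i) := by
  rw [trN, trace_mul_cycle, Unitary.coe_star_mul_self, one_mul, trace_diagonal, Complex.re_sum]
  rfl

lemma trN_eq_re_trace_sqrt (M : Matrix n n ℂ) : trN M = (CFC.sqrt (Mᴴ * M)).trace.re := by
  rw [CFC.sqrt_eq_real_sqrt _ (posSemidef_conjTranspose_mul_self M).nonneg, cfcₙ_eq_cfc,
    IsHermitian.cfc_eq, IsHermitian.cfc, Unitary.conjStarAlgAut_apply]
  rfl

lemma trN_nonneg (M : Matrix n n ℂ) : 0 ≤ trN M := by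
  rw [trN_eq_sum_sqrt_eigenvalues]
  exact Finset.sum_nonneg fun i _ => Real.sqrt_nonneg _

lemma re_trace_mul_le_trN {C : Matrix n n ℂ} (hC : C * Cᴴ ≤ 1) (M : Matrix n n ℂ) :
    (C * M).trace.re ≤ trN M := by
  set b := (posSemidef_conjTranspose_mul_self M).1.eigenvectorBasis
  rw [trace_eq_sum_inner_toEuclideanLin _ b, Complex.re_sum, trN_eq_sum_sqrt_eigenvalues]
  gcongr with i
  calc (⟪b i, toEuclideanLin (C * M) (b i)⟫_ℂ).re
      = (⟪toEuclideanLin Cᴴ (b i), toEuclideanLin M (b i)⟫_ℂ).re := by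
        rw [toEuclideanLin_conjTranspose_eq_adjoint, LinearMap.adjoint_inner_left,
          toLpLin_mul_same, LinearMap.comp_apply]
    _ ≤ ‖toEuclideanLin Cᴴ (b i)‖ * ‖toEuclideanLin M (b i)‖ :=
        (Complex.re_le_norm _).trans (norm_inner_le_norm _ _)
    _ ≤ 1 * ‖toEuclideanLin M (b i)‖ := by
        gcongr
        simpa using norm_toEuclideanLin_le_of_conjTranspose_mul_le_one
          (by rwa [conjTranspose_conjTranspose]) (b i)
    _ = _ := by rw [one_mul, norm_toEuclideanLin_eigenvectorBasis_conjTranspose_mul_self]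

/-- The bound `re_trace_mul_le_trN` is attained at `C = |M|⁺ Mᴴ`, where `|M|⁺` is the
pseudo-inverse of `|M| = √(Mᴴ M)` (in Lean `x⁻¹` is `0` at `x = 0`). -/
lemma exists_re_trace_mul_eq_trN (M : Matrix n n ℂ) :
    ∃ C : Matrix n n ℂ, C * Cᴴ ≤ 1 ∧ (C * M).trace.re = trN M := by
  set S := CFC.sqrt (Mᴴ * M)
  have hS : IsSelfAdjoint S := (CFC.sqrt_nonneg _).isSelfAdjoint
  have hcont : ∀ f : ℝ → ℝ, ContinuousOn f (spectrum ℝ S) := fun f =>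
    (finite_real_spectrum (A := S)).continuousOn f
  have hsq : Mᴴ * M = cfc (fun x : ℝ => x ^ 2) S := by
    rw [cfc_pow_id S 2, CFC.sq_sqrt _ (posSemidef_conjTranspose_mul_self M).nonneg]
  set T := cfc (fun x : ℝ => x⁻¹) S
  refine ⟨T * Mᴴ, ?_, ?_⟩
  · have hT : Tᴴ = T := (cfc_predicate _ S : IsSelfAdjoint T)
    rw [conjTranspose_mul, conjTranspose_conjTranspose, hT, Matrix.mul_assoc,
      ← Matrix.mul_assoc Mᴴ, hsq, ← cfc_mul _ _ S (hcont _) (hcont _),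
      ← cfc_mul _ _ S (hcont _) (hcont _)]
    refine cfc_le_one _ _ fun x _ => ?_
    rcases eq_or_ne x 0 with rfl | hx
    · simp
    · field_simp; rfl
  · rw [Matrix.mul_assoc, hsq, ← cfc_mul _ _ S (hcont _) (hcont _), cfc_congr (g := id),
      cfc_id ℝ S, trN_eq_re_trace_sqrt]
    intro x _
    show x⁻¹ * x ^ 2 = x
    rw [sq, ← mul_assoc, inv_mul_mul_self]

lemma trN_add_le (A B : Matrix n n ℂ) : trN (A + B) ≤ trN A + trN B := by
  obtain ⟨C, hC, hCtr⟩ := exists_re_trace_mul_eq_trN (A + B)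
  rw [← hCtr, Matrix.mul_add, trace_add, Complex.add_re]
  exact add_le_add (re_trace_mul_le_trN hC A) (re_trace_mul_le_trN hC B)

lemma trN_kronecker {m : Type*} [Fintype m] [DecidableEq m] (A : Matrix m m ℂ)
    (B : Matrix n n ℂ) : trN (A ⊗ₖ B) = trN A * trN B := by
  have hA := (CFC.sqrt_nonneg (Aᴴ * A)).posSemidef
  have hB := (CFC.sqrt_nonneg (Bᴴ * B)).posSemidef
  have hsqrt : CFC.sqrt ((A ⊗ₖ B)ᴴ * (A ⊗ₖ B)) = CFC.sqrt (Aᴴ * A) ⊗ₖ CFC.sqrt (Bᴴ * B) := by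
    rw [CFC.sqrt_eq_iff _ _ (posSemidef_conjTranspose_mul_self _).nonneg
      (hA.kronecker hB).nonneg, ← mul_kronecker_mul, CFC.sqrt_mul_sqrt_self _
      (posSemidef_conjTranspose_mul_self A).nonneg, CFC.sqrt_mul_sqrt_self _
      (posSemidef_conjTranspose_mul_self B).nonneg, conjTranspose_kronecker, mul_kronecker_mul]
  rw [trN_eq_re_trace_sqrt, trN_eq_re_trace_sqrt, trN_eq_re_trace_sqrt, hsqrt,
    trace_kronecker, Complex.mul_re, ← (Complex.nonneg_iff.mp hA.trace_nonneg).2,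
    ← (Complex.nonneg_iff.mp hB.trace_nonneg).2, mul_zero, sub_zero]

end TraceNorm

section KronCube

variable {m : Type*}

-- the terms of `(X + Y)^{⊗3}` of degree at most one in `Y`
def kronCubeDegLeOne (X Y : Matrix m m ℂ) : Matrix ((m × m) × m) ((m × m) × m) ℂ :=
  (X ⊗ₖ X) ⊗ₖ X + (Y ⊗ₖ X) ⊗ₖ X + (X ⊗ₖ Y) ⊗ₖ X + (X ⊗ₖ X) ⊗ₖ Y

lemma kronCubeDegLeOne_add_kronCubeDegLeOne (X Y : Matrix m m ℂ) :
    kronCubeDegLeOne X Y + kronCubeDegLeOne Y X = ((X + Y) ⊗ₖ (X + Y)) ⊗ₖ (X + Y) := by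
  simp only [kronCubeDegLeOne, add_kronecker, kronecker_add]
  abel

lemma trN_kronCubeDegLeOne_le [Fintype m] [DecidableEq m] (X Y : Matrix m m ℂ) :
    trN (kronCubeDegLeOne X Y) ≤ trN X ^ 3 + 3 * trN X ^ 2 * trN Y := by
  have hterm (P Q R : Matrix m m ℂ) : trN ((P ⊗ₖ Q) ⊗ₖ R) = trN P * trN Q * trN R := by
    rw [trN_kronecker, trN_kronecker]
  calc trN (kronCubeDegLeOne X Y)
      ≤ trN ((X ⊗ₖ X) ⊗ₖ X) + trN ((Y ⊗ₖ X) ⊗ₖ X) + trN ((X ⊗ₖ Y) ⊗ₖ X)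
          + trN ((X ⊗ₖ X) ⊗ₖ Y) := by
        refine (trN_add_le _ _).trans (add_le_add_left ((trN_add_le _ _).trans
          (add_le_add_left (trN_add_le _ _) _)) _)
    _ = trN X ^ 3 + 3 * trN X ^ 2 * trN Y := by simp only [hterm]; ring

end KronCube

lemma ptrans3_kronCubeDegLeOne {a b : Type*} (X : Matrix (a × b) (a × b) ℂ) :
    ptrans3 (kronCubeDegLeOne X (ptrans X)) = kronCubeDegLeOne (ptrans X) X := rfl

-- This is where the tripling map `f x = x²(3 - 2x)` comes from.
lemma cube_add_three_mul_sq_mul_le {x y : ℝ} (hxy : x + y ≤ 1) :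
    x ^ 3 + 3 * x ^ 2 * y ≤ x ^ 2 * (3 - 2 * x) := by
  nlinarith [mul_nonneg (sq_nonneg x) (sub_nonneg.mpr hxy)]

theorem tripling_bound_general {a b : Type*} [Fintype a] [Fintype b] [DecidableEq a] [DecidableEq b]
    (Λ H : Matrix (a × b) (a × b) ℂ)
    (hHΛ : H + ptrans H = Λ) (hHtn : trN H + trN (ptrans H) ≤ 1)
    (H' : Matrix (((a × b) × (a × b)) × (a × b)) (((a × b) × (a × b)) × (a × b)) ℂ)
    (hH' : H' = (H ⊗ₖ H) ⊗ₖ H + (ptrans H ⊗ₖ H) ⊗ₖ H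
        + (H ⊗ₖ ptrans H) ⊗ₖ H + (H ⊗ₖ H) ⊗ₖ ptrans H)
    (f : ℝ → ℝ) (hf : ∀ x, f x = x ^ 2 * (3 - 2 * x)) :
    H' + ptrans3 H' = (Λ ⊗ₖ Λ) ⊗ₖ Λ ∧ trN H' ≤ f (trN H) ∧
      trN (ptrans3 H') ≤ f (trN (ptrans H)) ∧ trN H' + trN (ptrans3 H') ≤ 1 := by
  change H' = kronCubeDegLeOne H (ptrans H) at hH'
  subst hH' hHΛ
  have hx := trN_nonneg H
  have hy := trN_nonneg (ptrans H)
  have hH'le := trN_kronCubeDegLeOne_le H (ptrans H)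
  have hH'ptle := trN_kronCubeDegLeOne_le (ptrans H) H
  rw [ptrans3_kronCubeDegLeOne, hf, hf]
  refine ⟨kronCubeDegLeOne_add_kronCubeDegLeOne _ _, ?_, ?_, ?_⟩
  · exact hH'le.trans (cube_add_three_mul_sq_mul_le hHtn)
  · exact hH'ptle.trans (cube_add_three_mul_sq_mul_le (by linarith))
  · nlinarith [pow_le_one₀ (add_nonneg hx hy) hHtn (n := 3)]

theorem tripling_bound {a b : Type*} [Fintype a] [Fintype b] [DecidableEq a] [DecidableEq b]
    (Λ H : Matrix (a × b) (a × b) ℂ)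
    (hΛ : Λ.IsHermitian) (hH : H.IsHermitian)
    (hΛpt : ptrans Λ = Λ) (hΛtn : trN Λ ≤ 1)
    (hHΛ : H + ptrans H = Λ) (hHtn : trN H + trN (ptrans H) ≤ 1)
    (H' : Matrix (((a × b) × (a × b)) × (a × b)) (((a × b) × (a × b)) × (a × b)) ℂ)
    (hH' : H' = (H ⊗ₖ H) ⊗ₖ H + (ptrans H ⊗ₖ H) ⊗ₖ H
        + (H ⊗ₖ ptrans H) ⊗ₖ H + (H ⊗ₖ H) ⊗ₖ ptrans H)
    (f : ℝ → ℝ) (hf : ∀ x, f x = x ^ 2 * (3 - 2 * x)) :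
    H' + ptrans3 H' = (Λ ⊗ₖ Λ) ⊗ₖ Λ ∧ trN H' ≤ f (trN H) ∧
      trN (ptrans3 H') ≤ f (trN (ptrans H)) ∧ trN H' + trN (ptrans3 H') ≤ 1 :=
  tripling_bound_general Λ H hHΛ hHtn H' hH' f hf
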